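/- arXiv:1607.08037 — 5 statements merged into one kernel-verified Lean document; each statement's English description precedes it below -/
import Mathlib

section
/- Let f ∈ ℂ[z] be a polynomial of degree d > 1. Then the functions z ↦ (d^n−1)^{-1}·log|(f^n)'(z)| − g_f(z) converge to 0 as n → ∞, uniformly on every compact subset of the set Ω := I_∞(f) \ ⋃_{n≥0} (f^n)^{-1}(C(f)∩ℂ). -/
open Polynomial MeasureTheory Filter

/-- The `n`-th iterate of a polynomial `f` (as a polynomial). -/
noncomputable def polyIter (f : Polynomial ℂ) : ℕ → Polynomial ℂ
  | 0 => Polynomial.X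
  | n + 1 => f.comp (polyIter f n)

/-- The basin of infinity `I_∞(f) = {z : |f^n(z)| → ∞}`. -/
def basinInfty (f : Polynomial ℂ) : Set ℂ :=
  {z : ℂ | Tendsto (fun n : ℕ => ‖(polyIter f n).eval z‖) atTop atTop}

/-!
By the chain rule `log |(fⁿ)'(z)| = ∑_{k<n} log |f'(fᵏ z)|`, and the functional equation
`g ∘ f = d • g` gives `(dⁿ - 1) g(z) = ∑_{k<n} (d - 1) g(fᵏ z)`. Near infinity
`log |f'(w)| = (d - 1) log |w| + O(1)` and `g(w) = log |w| + O(1)`, so each summand of the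
difference is `O(1)` once the orbit has entered a forward-invariant neighbourhood of `∞`; by
compactness all of `K` has entered it after a fixed number of steps. The difference is therefore
`O(n)` uniformly on `K`, which is `o(dⁿ - 1)`.
-/

open Topology Bornology Asymptotics

theorem Polynomial.exists_abs_log_norm_eval_sub_le {𝕜 : Type*} [NormedField 𝕜] (p : 𝕜[X]) :
    ∃ C, ∀ᶠ w in cobounded 𝕜, |Real.log ‖p.eval w‖ - p.natDegree * Real.log ‖w‖| ≤ C := by
  by_cases hp : p = 0
  · exact ⟨0, Eventually.of_forall fun w => by simp [hp]⟩
  have hlc : p.leadingCoeff ≠ 0 := leadingCoeff_ne_zero.mpr hp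
  have hratio : Tendsto (fun w => p.eval w / (p.leadingCoeff * w ^ p.natDegree)) (cobounded 𝕜)
      (𝓝 1) :=
    (isEquivalent_iff_tendsto_one ((eventually_ne_cobounded 0).mono fun w hw =>
      mul_ne_zero hlc (pow_ne_zero _ hw))).mp isEquivalent_cobounded_leading_monomial
  have hlog : Tendsto (fun w => Real.log ‖p.eval w / (p.leadingCoeff * w ^ p.natDegree)‖)
      (cobounded 𝕜) (𝓝 0) := by
    simpa using (hratio.norm.log (by simp))
  refine ⟨1 + |Real.log ‖p.leadingCoeff‖|, ?_⟩
  filter_upwards [hlog.eventually (Metric.closedBall_mem_nhds 0 one_pos),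
    hratio.eventually_ne one_ne_zero, eventually_ne_cobounded 0] with w hw hne hw0
  set q := p.eval w / (p.leadingCoeff * w ^ p.natDegree)
  have hq : p.eval w = q * (p.leadingCoeff * w ^ p.natDegree) :=
    (div_mul_cancel₀ _ (mul_ne_zero hlc (pow_ne_zero _ hw0))).symm
  rw [hq, norm_mul, norm_mul, norm_pow, Real.log_mul (norm_ne_zero_iff.mpr hne)
    (mul_ne_zero (norm_ne_zero_iff.mpr hlc) (pow_ne_zero _ (norm_ne_zero_iff.mpr hw0))),
    Real.log_mul (norm_ne_zero_iff.mpr hlc) (pow_ne_zero _ (norm_ne_zero_iff.mpr hw0)),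
    Real.log_pow, ← add_assoc, add_sub_cancel_right]
  rw [Real.dist_eq, sub_zero] at hw
  exact (abs_add_le _ _).trans (add_le_add hw le_rfl)

theorem tendstoUniformlyOn_zero_of_norm_le {ι α β : Type*} [SeminormedAddCommGroup β]
    {F : ι → α → β} {l : Filter ι} {s : Set α} {a : ι → ℝ} (ha : Tendsto a l (𝓝 0))
    (hF : ∀ᶠ i in l, ∀ x ∈ s, ‖F i x‖ ≤ a i) : TendstoUniformlyOn F 0 l s := by
  refine Metric.tendstoUniformlyOn_iff.mpr fun ε hε => ?_
  filter_upwards [hF, ha.eventually (gt_mem_nhds hε)] with i hi hiε x hx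
  rw [Pi.zero_apply, dist_zero_left]
  exact (hi x hx).trans_lt hiε

theorem tendsto_mul_add_div_pow_sub_one {r : ℝ} (hr : 1 < r) (a b : ℝ) :
    Tendsto (fun n : ℕ => (a * n + b) / (r ^ n - 1)) atTop (𝓝 0) := by
  have hpow : Tendsto (fun n : ℕ => r ^ n) atTop atTop := tendsto_pow_atTop_atTop_of_one_lt hr
  have hequiv : (fun n : ℕ => r ^ n - 1) ~[atTop] fun n => r ^ n :=
    IsEquivalent.refl.sub_isLittleO <| (isLittleO_one_left_iff ℝ).mpr <| by
      simpa [abs_of_pos (one_pos.trans hr)] using hpow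
  refine (IsEquivalent.refl.div hequiv).symm.tendsto_nhds ?_
  have h : Tendsto (fun n : ℕ => a * ((n : ℝ) ^ 1 / r ^ n) + b / r ^ n) atTop (𝓝 0) := by
    simpa using ((tendsto_pow_const_div_const_pow_of_one_lt 1 hr).const_mul a).add
      (hpow.const_div_atTop b)
  refine h.congr fun n => ?_
  simp only [Pi.div_apply, pow_one]
  ring

section PolyIter

variable (f : ℂ[X])

theorem polyIter_succ (n : ℕ) : polyIter f (n + 1) = f.comp (polyIter f n) := rfl

theorem polyIter_add (m n : ℕ) : polyIter f (m + n) = (polyIter f n).comp (polyIter f m) := by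
  induction n with
  | zero => simp [polyIter]
  | succ n ih => rw [← add_assoc, polyIter_succ, polyIter_succ, ih, comp_assoc]

theorem eval_polyIter_add (m n : ℕ) (z : ℂ) :
    (polyIter f (m + n)).eval z = (polyIter f n).eval ((polyIter f m).eval z) := by
  rw [polyIter_add, eval_comp]

theorem eval_polyIter_succ' (n : ℕ) (z : ℂ) :
    (polyIter f (n + 1)).eval z = (polyIter f n).eval (f.eval z) := by
  rw [add_comm, eval_polyIter_add]
  simp [polyIter]

theorem eval_derivative_polyIter (n : ℕ) (z : ℂ) :
    (derivative (polyIter f n)).eval z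
      = ∏ k ∈ Finset.range n, (derivative f).eval ((polyIter f k).eval z) := by
  induction n with
  | zero => simp [polyIter]
  | succ n ih =>
    rw [Finset.prod_range_succ, ← ih, polyIter_succ, derivative_comp, eval_mul, eval_comp]

theorem log_norm_eval_derivative_polyIter {n : ℕ} {z : ℂ}
    (hz : ∀ k < n, (derivative f).eval ((polyIter f k).eval z) ≠ 0) :
    Real.log ‖(derivative (polyIter f n)).eval z‖
      = ∑ k ∈ Finset.range n, Real.log ‖(derivative f).eval ((polyIter f k).eval z)‖ := by
  rw [eval_derivative_polyIter, norm_prod, Real.log_prod]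
  exact fun k hk => norm_ne_zero_iff.mpr (hz k (Finset.mem_range.mp hk))

variable {f} {R : ℝ}

theorem le_norm_eval_polyIter (hR : ∀ w : ℂ, R ≤ ‖w‖ → R ≤ ‖f.eval w‖) {w : ℂ} (hw : R ≤ ‖w‖)
    (n : ℕ) : R ≤ ‖(polyIter f n).eval w‖ := by
  induction n with
  | zero => simpa [polyIter] using hw
  | succ n ih => simpa [polyIter_succ, eval_comp] using hR _ ih

theorem IsCompact.exists_le_norm_eval_polyIter {K : Set ℂ} (hK : IsCompact K)
    (hKf : K ⊆ basinInfty f) (hR : ∀ w : ℂ, R ≤ ‖w‖ → R ≤ ‖f.eval w‖) :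
    ∃ N, ∀ z ∈ K, R ≤ ‖(polyIter f N).eval z‖ := by
  have hopen (n : ℕ) : IsOpen {z : ℂ | R < ‖(polyIter f n).eval z‖} :=
    isOpen_lt continuous_const (polyIter f n).continuous.norm
  have hcover : K ⊆ ⋃ n, {z : ℂ | R < ‖(polyIter f n).eval z‖} := fun z hz =>
    Set.mem_iUnion.mpr ((hKf hz).eventually_gt_atTop R).exists
  obtain ⟨s, hs⟩ := hK.elim_finite_subcover _ hopen hcover
  refine ⟨s.sup id, fun z hz => ?_⟩
  obtain ⟨n, hns, hn⟩ := Set.mem_iUnion₂.mp (hs hz)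
  obtain ⟨m, hm⟩ := Nat.exists_eq_add_of_le (Finset.le_sup (f := id) hns)
  rw [hm, eval_polyIter_add]
  exact le_norm_eval_polyIter hR (le_of_lt hn) m

end PolyIter

structure IsEscapeRadius (f : ℂ[X]) (d : ℕ) (R B : ℝ) : Prop where
  one_le : 1 ≤ R
  le_norm_eval : ∀ w : ℂ, R ≤ ‖w‖ → R ≤ ‖f.eval w‖
  abs_log_norm_eval_sub_le : ∀ w : ℂ, R ≤ ‖w‖ → |Real.log ‖f.eval w‖ - d * Real.log ‖w‖| ≤ B

theorem exists_isEscapeRadius {f : ℂ[X]} {d : ℕ} (hd : 1 < d) (hdeg : f.natDegree = d) :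
    ∃ R A B : ℝ, IsEscapeRadius f d R B ∧ ∀ w : ℂ, R ≤ ‖w‖ →
      |Real.log ‖(derivative f).eval w‖ - (d - 1) * Real.log ‖w‖| ≤ A := by
  obtain ⟨B, hB⟩ := f.exists_abs_log_norm_eval_sub_le
  obtain ⟨A, hA⟩ := (derivative f).exists_abs_log_norm_eval_sub_le
  have hlarge : ∀ᶠ w in cobounded ℂ, max B 0 < Real.log ‖w‖ :=
    (Real.tendsto_log_atTop.comp tendsto_norm_cobounded_atTop).eventually_gt_atTop _
  obtain ⟨R, -, hR⟩ := hasBasis_cobounded_norm.eventually_iff.mp (hB.and (hA.and hlarge))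
  simp only [natDegree_derivative, hdeg, Nat.cast_sub hd.le, Nat.cast_one] at hR
  have hexpand (w : ℂ) (hw : R ≤ ‖w‖) : ‖w‖ ≤ ‖f.eval w‖ := by
    obtain ⟨hBw, -, hlw⟩ := hR hw
    have hlw0 : 0 < Real.log ‖w‖ := (le_max_right _ _).trans_lt hlw
    have hd2 : (2 : ℝ) ≤ d := by exact_mod_cast hd
    -- `log ‖f w‖ ≥ d log ‖w‖ - B ≥ 2 log ‖w‖ - B > log ‖w‖`
    have hlt : Real.log ‖w‖ < Real.log ‖f.eval w‖ := by
      nlinarith [(abs_le.mp hBw).1, le_max_left B 0]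
    have hw0 : 0 < ‖w‖ := one_pos.trans ((Real.log_pos_iff (norm_nonneg _)).mp hlw0)
    have hfw : 0 < ‖f.eval w‖ :=
      one_pos.trans ((Real.log_pos_iff (norm_nonneg _)).mp (hlw0.trans hlt))
    exact ((Real.log_lt_log_iff hw0 hfw).mp hlt).le
  refine ⟨max R 1, A, B, ⟨le_max_right _ _, fun w hw => ?_, fun w hw => ?_⟩, fun w hw => ?_⟩
  · exact hw.trans (hexpand w (le_of_max_le_left hw))
  · exact (hR (le_of_max_le_left hw)).1
  · exact (hR (le_of_max_le_left hw)).2.1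

def IsGreenFunction (f : ℂ[X]) (d : ℕ) (g : ℂ → ℝ) : Prop :=
  ∀ z : ℂ, Tendsto (fun n : ℕ => Real.log (max 1 ‖(polyIter f n).eval z‖) / (d : ℝ) ^ n)
    atTop (𝓝 (g z))

namespace IsGreenFunction

variable {f : ℂ[X]} {d : ℕ} {g : ℂ → ℝ} {R A B : ℝ}

theorem apply_eval (hg : IsGreenFunction f d g) (hd : d ≠ 0) (z : ℂ) :
    g (f.eval z) = d * g z := by
  have hlim : Tendsto (fun n : ℕ => Real.log (max 1 ‖(polyIter f (n + 1)).eval z‖)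
      / (d : ℝ) ^ (n + 1)) atTop (𝓝 (g (f.eval z) / d)) := by
    refine ((hg (f.eval z)).div_const (d : ℝ)).congr fun n => ?_
    rw [eval_polyIter_succ', pow_succ, div_div]
  have := tendsto_nhds_unique ((hg z).comp (tendsto_add_atTop_nat 1)) hlim
  rw [this, mul_div_cancel₀ _ (Nat.cast_ne_zero.mpr hd)]

theorem apply_eval_polyIter (hg : IsGreenFunction f d g) (hd : d ≠ 0) (k : ℕ) (z : ℂ) :
    g ((polyIter f k).eval z) = d ^ k * g z := by
  induction k with
  | zero => simp [polyIter]
  | succ k ih => rw [polyIter_succ, eval_comp, hg.apply_eval hd, ih, pow_succ', mul_assoc]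

theorem pow_sub_one_mul_eq_sum (hg : IsGreenFunction f d g) (hd : d ≠ 0) (n : ℕ) (z : ℂ) :
    ((d : ℝ) ^ n - 1) * g z
      = ∑ k ∈ Finset.range n, ((d : ℝ) - 1) * g ((polyIter f k).eval z) := by
  simp only [hg.apply_eval_polyIter hd, ← geom_sum_mul, Finset.sum_mul]
  exact Finset.sum_congr rfl fun k _ => by ring

theorem log_norm_eval_derivative_polyIter_sub (hg : IsGreenFunction f d g) (hd : d ≠ 0)
    {n : ℕ} {z : ℂ} (hz : ∀ k < n, (derivative f).eval ((polyIter f k).eval z) ≠ 0) :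
    Real.log ‖(derivative (polyIter f n)).eval z‖ - ((d : ℝ) ^ n - 1) * g z
      = ∑ k ∈ Finset.range n, (Real.log ‖(derivative f).eval ((polyIter f k).eval z)‖
          - ((d : ℝ) - 1) * g ((polyIter f k).eval z)) := by
  rw [log_norm_eval_derivative_polyIter f hz, hg.pow_sub_one_mul_eq_sum hd,
    Finset.sum_sub_distrib]

theorem abs_sub_log_norm_le (hg : IsGreenFunction f d g) (hd : 1 < d)
    (hR : IsEscapeRadius f d R B) {w : ℂ} (hw : R ≤ ‖w‖) :
    |g w - Real.log ‖w‖| ≤ B / (d - 1) := by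
  have hd' : (1 : ℝ) < d := by exact_mod_cast hd
  set u : ℕ → ℝ := fun m => Real.log ‖(polyIter f m).eval w‖ / (d : ℝ) ^ m
  have hu : Tendsto u atTop (𝓝 (g w)) := (hg w).congr fun m => by
    rw [max_eq_right (hR.one_le.trans (le_norm_eval_polyIter hR.le_norm_eval hw m))]
  have hstep (m : ℕ) : dist (u m) (u (m + 1)) ≤ B / d * (1 / d) ^ m := by
    have hdm : (0 : ℝ) < (d : ℝ) ^ (m + 1) := by positivity
    have heq : u m - u (m + 1) = -(Real.log ‖f.eval ((polyIter f m).eval w)‖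
        - d * Real.log ‖(polyIter f m).eval w‖) / (d : ℝ) ^ (m + 1) := by
      simp only [u, polyIter_succ, eval_comp]
      field_simp
      ring
    rw [Real.dist_eq, heq, abs_div, abs_neg, abs_of_pos hdm, div_le_iff₀ hdm]
    calc _ ≤ B := hR.abs_log_norm_eval_sub_le _ (le_norm_eval_polyIter hR.le_norm_eval hw m)
      _ = B / d * (1 / d) ^ m * (d : ℝ) ^ (m + 1) := by
        rw [one_div, inv_pow, pow_succ]
        field_simp
  have := dist_le_of_le_geometric_of_tendsto₀ (1 / (d : ℝ)) (B / d)
    ((div_lt_one (by linarith)).mpr hd') hstep hu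
  rw [dist_comm, Real.dist_eq] at this
  convert this using 1
  · simp [u, polyIter]
  · field_simp

theorem abs_log_norm_eval_derivative_sub_le (hg : IsGreenFunction f d g) (hd : 1 < d)
    (hR : IsEscapeRadius f d R B)
    (hA : ∀ w : ℂ, R ≤ ‖w‖ →
      |Real.log ‖(derivative f).eval w‖ - (d - 1) * Real.log ‖w‖| ≤ A)
    {w : ℂ} (hw : R ≤ ‖w‖) : |Real.log ‖(derivative f).eval w‖ - (d - 1) * g w| ≤ A + B := by
  have hd1 : (0 : ℝ) < d - 1 := sub_pos.mpr (by exact_mod_cast hd)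
  calc |Real.log ‖(derivative f).eval w‖ - (d - 1) * g w|
      = |(Real.log ‖(derivative f).eval w‖ - (d - 1) * Real.log ‖w‖)
          - (d - 1) * (g w - Real.log ‖w‖)| := by ring_nf
    _ ≤ A + (d - 1) * (B / (d - 1)) := by
        refine (abs_sub _ _).trans (add_le_add (hA w hw) ?_)
        rw [abs_mul, abs_of_pos hd1]
        exact mul_le_mul_of_nonneg_left (hg.abs_sub_log_norm_le hd hR hw) hd1.le
    _ = A + B := by field_simp

theorem abs_log_norm_eval_derivative_polyIter_add_sub_le (hg : IsGreenFunction f d g)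
    (hd : 1 < d) (hR : IsEscapeRadius f d R B)
    (hA : ∀ w : ℂ, R ≤ ‖w‖ →
      |Real.log ‖(derivative f).eval w‖ - (d - 1) * Real.log ‖w‖| ≤ A)
    {N : ℕ} {z : ℂ} (hN : R ≤ ‖(polyIter f N).eval z‖)
    (hz : ∀ k, (derivative f).eval ((polyIter f k).eval z) ≠ 0) (m : ℕ) :
    |Real.log ‖(derivative (polyIter f (N + m))).eval z‖ - ((d : ℝ) ^ (N + m) - 1) * g z|
      ≤ |Real.log ‖(derivative (polyIter f N)).eval z‖ - ((d : ℝ) ^ N - 1) * g z|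
        + (A + B) * m := by
  have hd0 : d ≠ 0 := by omega
  rw [hg.log_norm_eval_derivative_polyIter_sub hd0 fun k _ => hz k,
    hg.log_norm_eval_derivative_polyIter_sub hd0 fun k _ => hz k, Finset.sum_range_add]
  refine (abs_add_le _ _).trans (add_le_add le_rfl ((Finset.abs_sum_le_sum_abs _ _).trans ?_))
  calc _ ≤ ∑ _k ∈ Finset.range m, (A + B) := Finset.sum_le_sum fun k _ => by
          rw [eval_polyIter_add]
          exact hg.abs_log_norm_eval_derivative_sub_le hd hR hA
            (le_norm_eval_polyIter hR.le_norm_eval hN k)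
    _ = (A + B) * m := by rw [Finset.sum_const, Finset.card_range, nsmul_eq_mul, mul_comm]

theorem exists_abs_log_norm_eval_derivative_polyIter_sub_le (hg : IsGreenFunction f d g)
    (hd : 1 < d) (hR : IsEscapeRadius f d R B) {K : Set ℂ} (hK : IsCompact K) {N : ℕ}
    (hN : ∀ z ∈ K, R ≤ ‖(polyIter f N).eval z‖)
    (hz : ∀ z ∈ K, (derivative (polyIter f N)).eval z ≠ 0) :
    ∃ E, ∀ z ∈ K,
      |Real.log ‖(derivative (polyIter f N)).eval z‖ - ((d : ℝ) ^ N - 1) * g z| ≤ E := by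
  obtain ⟨M, hM⟩ := hK.exists_bound_of_continuousOn (polyIter f N).continuous.continuousOn
  obtain ⟨L, hL⟩ := hK.exists_bound_of_continuousOn <|
    ((derivative (polyIter f N)).continuous.norm.continuousOn).log
      fun z hzK => norm_ne_zero_iff.mpr (hz z hzK)
  refine ⟨L + (M + B / (d - 1)), fun z hz => ?_⟩
  have hdN : (1 : ℝ) ≤ (d : ℝ) ^ N := one_le_pow₀ (by exact_mod_cast hd.le)
  set w := (polyIter f N).eval z
  have hgw : |g w| ≤ M + B / (d - 1) := by
    have hlog : Real.log ‖w‖ ≤ M :=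
      (Real.log_le_self (norm_nonneg w)).trans (by simpa using hM z hz)
    have hlog0 : 0 ≤ Real.log ‖w‖ := Real.log_nonneg (hR.one_le.trans (hN z hz))
    have := abs_sub_abs_le_abs_sub (g w) (Real.log ‖w‖)
    rw [abs_of_nonneg hlog0] at this
    linarith [hg.abs_sub_log_norm_le hd hR (hN z hz)]
  have hgz : |((d : ℝ) ^ N - 1) * g z| ≤ |g w| := by
    rw [show g w = d ^ N * g z from hg.apply_eval_polyIter (by omega) N z, abs_mul, abs_mul,
      abs_of_nonneg (sub_nonneg.mpr hdN), abs_of_nonneg (zero_le_one.trans hdN)]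
    exact mul_le_mul_of_nonneg_right (by linarith) (abs_nonneg _)
  calc _ ≤ |Real.log ‖(derivative (polyIter f N)).eval z‖| + |((d : ℝ) ^ N - 1) * g z| :=
        abs_sub _ _
    _ ≤ L + (M + B / (d - 1)) := add_le_add (by simpa using hL z hz) (hgz.trans hgw)

end IsGreenFunction

theorem stmt4 (f : Polynomial ℂ) (d : ℕ) (hd : 1 < d) (hdeg : f.natDegree = d)
    (g : ℂ → ℝ)
    (hg : ∀ z : ℂ, Tendsto
      (fun n : ℕ => Real.log (max 1 (‖(polyIter f n).eval z‖)) / (d : ℝ) ^ n)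
      atTop (nhds (g z)))
    (K : Set ℂ) (hK : IsCompact K)
    (hKΩ : K ⊆ basinInfty f \
      ⋃ n : ℕ, {z : ℂ | (Polynomial.derivative f).eval ((polyIter f n).eval z) = 0}) :
    TendstoUniformlyOn
      (fun (n : ℕ) (z : ℂ) =>
        Real.log (‖(Polynomial.derivative (polyIter f n)).eval z‖) /
          ((d : ℝ) ^ n - 1) - g z)
      0 atTop K := by
  have hg : IsGreenFunction f d g := hg
  obtain ⟨R, A, B, hR, hA⟩ := exists_isEscapeRadius hd hdeg
  obtain ⟨N, hN⟩ := hK.exists_le_norm_eval_polyIter (fun z hz => (hKΩ hz).1) hR.le_norm_eval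
  have hcrit (z : ℂ) (hz : z ∈ K) (k : ℕ) : (derivative f).eval ((polyIter f k).eval z) ≠ 0 :=
    fun hk => (hKΩ hz).2 (Set.mem_iUnion.mpr ⟨k, hk⟩)
  obtain ⟨E, hE⟩ := hg.exists_abs_log_norm_eval_derivative_polyIter_sub_le hd hR hK hN
    fun z hz => by
      rw [eval_derivative_polyIter]
      exact Finset.prod_ne_zero_iff.mpr fun k _ => hcrit z hz k
  have hd' : (1 : ℝ) < d := by exact_mod_cast hd
  refine tendstoUniformlyOn_zero_of_norm_le
    (tendsto_mul_add_div_pow_sub_one hd' (A + B) (E - (A + B) * N)) ?_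
  filter_upwards [eventually_ge_atTop N, eventually_gt_atTop 0] with n hnN hn0 z hz
  obtain ⟨m, rfl⟩ := Nat.exists_eq_add_of_le hnN
  have hpos : 0 < (d : ℝ) ^ (N + m) - 1 := sub_pos.mpr (one_lt_pow₀ hd' hn0.ne')
  rw [Real.norm_eq_abs, div_sub' hpos.ne', abs_div, abs_of_pos hpos]
  refine div_le_div_of_nonneg_right ?_ hpos.le
  calc _ ≤ _ := hg.abs_log_norm_eval_derivative_polyIter_add_sub_le hd hR hA (hN z hz)
        (hcrit z hz) m
    _ ≤ (A + B) * ↑(N + m) + (E - (A + B) * N) := by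
        push_cast
        linarith [hE z hz]
end

section
/- Let f ∈ ℂ[z] be a polynomial of degree d > 1. Then there is a constant C > 0 such that for every n ≥ 1 and every z ∈ ℂ, log max{1, |(f^n)'(z)|} ≤ (d^n−1)·g_f(z) + C·n. -/
/-!
A polynomial of degree `d` satisfies `d log⁺|w| - A ≤ log⁺|f w|` and `log⁺|f' w| ≤ (d - 1) log⁺|w| + B`.
The first inequality, iterated along the orbit, gives `log⁺|z| ≤ g z + A / (d - 1)`; the second, fed
into the chain rule `(fⁿ⁺¹)' = (fⁿ)' · f' ∘ fⁿ` together with `g ∘ fⁿ = dⁿ g`, adds at most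
`(d - 1) dⁿ g z + const` to `log⁺|(fⁿ)'(z)|` at each step, and `∑_{k<n} (d - 1) dᵏ = dⁿ - 1`.
-/

open Polynomial MeasureTheory Filter

open Real Asymptotics Bornology Finset Topology

namespace Polynomial

variable {𝕜 : Type*} [NormedField 𝕜]

theorem norm_eval_le_sum_norm_coeff_mul {p : 𝕜[X]} {D : ℕ} (hD : p.natDegree ≤ D) (w : 𝕜) :
    ‖p.eval w‖ ≤ (∑ i ∈ range (D + 1), ‖p.coeff i‖) * max 1 ‖w‖ ^ D := by
  rw [eval_eq_sum_range' (Nat.lt_succ_of_le hD), sum_mul]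
  refine (norm_sum_le _ _).trans (sum_le_sum fun i hi => ?_)
  rw [norm_mul, norm_pow]
  gcongr
  calc ‖w‖ ^ i ≤ max 1 ‖w‖ ^ i := by gcongr; exact le_max_right _ _
    _ ≤ max 1 ‖w‖ ^ D := pow_le_pow_right₀ (le_max_left _ _) (Nat.lt_succ_iff.mp (mem_range.mp hi))

theorem exists_posLog_norm_eval_le {p : 𝕜[X]} {D : ℕ} (hD : p.natDegree ≤ D) :
    ∃ B, ∀ w : 𝕜, log⁺ ‖p.eval w‖ ≤ D * log⁺ ‖w‖ + B := by
  refine ⟨log⁺ (∑ i ∈ range (D + 1), ‖p.coeff i‖), fun w => ?_⟩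
  have hmax : log⁺ (max 1 ‖w‖) = log⁺ ‖w‖ := by
    rw [posLog_eq_log_max_one (norm_nonneg _),
      posLog_eq_log_max_one (zero_le_one.trans (le_max_left _ _)), max_eq_right (le_max_left _ _)]
  calc log⁺ ‖p.eval w‖
      ≤ log⁺ ((∑ i ∈ range (D + 1), ‖p.coeff i‖) * max 1 ‖w‖ ^ D) :=
        posLog_le_posLog (norm_nonneg _) (norm_eval_le_sum_norm_coeff_mul hD w)
    _ ≤ _ := posLog_mul
    _ = _ := by rw [posLog_pow, hmax, add_comm]

theorem exists_natDegree_mul_posLog_norm_le (p : 𝕜[X]) :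
    ∃ A, ∀ w : 𝕜, p.natDegree * log⁺ ‖w‖ ≤ log⁺ ‖p.eval w‖ + A := by
  rcases eq_or_ne p 0 with rfl | hp
  · exact ⟨0, fun w => by simp⟩
  have hO : (· ^ p.natDegree) =O[cobounded 𝕜] p.eval :=
    (isBigO_self_const_mul (leadingCoeff_ne_zero.mpr hp) _ _).trans
      isEquivalent_cobounded_leading_monomial.symm.isBigO
  obtain ⟨c, hc⟩ := hO.bound
  obtain ⟨R, -, hR⟩ := hasBasis_cobounded_norm.eventually_iff.mp hc
  have hRpos : 0 ≤ p.natDegree * log⁺ R := mul_nonneg (Nat.cast_nonneg _) posLog_nonneg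
  refine ⟨p.natDegree * log⁺ R + log⁺ c, fun w => ?_⟩
  rcases le_total R ‖w‖ with hw | hw
  · calc p.natDegree * log⁺ ‖w‖ = log⁺ ‖w ^ p.natDegree‖ := by rw [norm_pow, posLog_pow]
      _ ≤ log⁺ (c * ‖p.eval w‖) := posLog_le_posLog (norm_nonneg _) (hR hw)
      _ ≤ log⁺ c + log⁺ ‖p.eval w‖ := posLog_mul
      _ ≤ _ := by linarith
  · have := mul_le_mul_of_nonneg_left (posLog_le_posLog (norm_nonneg _) hw)
      (Nat.cast_nonneg p.natDegree)
    linarith [posLog_nonneg (x := c), posLog_nonneg (x := ‖p.eval w‖)]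

end Polynomial

section Escape

variable {X : Type*} {T : X → X}

theorem pow_mul_le_iterate {H : X → ℝ} {d : ℝ} (hd : 0 ≤ d) (hH : ∀ x, d * H x ≤ H (T x))
    (n : ℕ) (x : X) : d ^ n * H x ≤ H (T^[n] x) := by
  induction n with
  | zero => simp
  | succ n ih =>
    rw [pow_succ', mul_assoc, Function.iterate_succ_apply']
    exact (mul_le_mul_of_nonneg_left ih hd).trans (hH _)

variable {h G : X → ℝ} {d : ℝ}
  (hG : ∀ x, Tendsto (fun n : ℕ => h (T^[n] x) / d ^ n) atTop (𝓝 (G x)))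
include hG

theorem apply_map_eq_mul_of_tendsto (hd : d ≠ 0) (x : X) : G (T x) = d * G x := by
  refine tendsto_nhds_unique (hG (T x)) (((hG x).comp (tendsto_add_atTop_nat 1)).const_mul d
    |>.congr fun n => ?_)
  simp only [Function.comp_apply, Function.iterate_succ_apply, pow_succ]
  field_simp

theorem apply_iterate_eq_pow_mul_of_tendsto (hd : d ≠ 0) (n : ℕ) (x : X) :
    G (T^[n] x) = d ^ n * G x := by
  induction n with
  | zero => simp
  | succ n ih =>
    rw [Function.iterate_succ_apply', apply_map_eq_mul_of_tendsto hG hd, ih, pow_succ']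
    ring

/-- The shift `H = h - A / (d - 1)` absorbs the error term: `d * H ≤ H ∘ T`. -/
theorem sub_le_of_tendsto {A : ℝ} (hd : 1 < d) (hh : ∀ x, d * h x ≤ h (T x) + A) (x : X) :
    h x - A / (d - 1) ≤ G x := by
  have hd0 : 0 < d := zero_lt_one.trans hd
  have hd1 : d - 1 ≠ 0 := (sub_pos.2 hd).ne'
  have hH : ∀ y, d * (h y - A / (d - 1)) ≤ h (T y) - A / (d - 1) := fun y => by
    have : d * (A / (d - 1)) = A + A / (d - 1) := by field_simp; ring
    linarith [hh y]
  have hlim : Tendsto (fun n : ℕ => h (T^[n] x) / d ^ n - A / (d - 1) / d ^ n) atTop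
      (𝓝 (G x - 0)) :=
    (hG x).sub (tendsto_const_nhds.div_atTop (tendsto_pow_atTop_atTop_of_one_lt hd))
  refine ge_of_tendsto' (by simpa using hlim) fun n => ?_
  rw [← sub_div, le_div_iff₀ (pow_pos hd0 n), mul_comm]
  exact pow_mul_le_iterate hd0.le hH n x

end Escape

theorem polyIter_eval (f : ℂ[X]) (n : ℕ) (z : ℂ) : (polyIter f n).eval z = (f.eval ·)^[n] z := by
  induction n with
  | zero => simp [polyIter]
  | succ n ih => rw [polyIter, eval_comp, ih, Function.iterate_succ_apply']

theorem posLog_norm_derivative_polyIter_le {f : ℂ[X]} {g : ℂ → ℝ} {d B C : ℝ} (hd : 1 ≤ d)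
    (hf' : ∀ w, log⁺ ‖(derivative f).eval w‖ ≤ (d - 1) * log⁺ ‖w‖ + B)
    (hiter : ∀ n z, log⁺ ‖(polyIter f n).eval z‖ ≤ d ^ n * g z + C) (n : ℕ) (z : ℂ) :
    log⁺ ‖(derivative (polyIter f n)).eval z‖ ≤ (d ^ n - 1) * g z + n * ((d - 1) * C + B) := by
  induction n with
  | zero => simp [polyIter]
  | succ n ih =>
    have hchain : (derivative (polyIter f (n + 1))).eval z =
        (derivative (polyIter f n)).eval z * (derivative f).eval ((polyIter f n).eval z) := by
      rw [polyIter, derivative_comp, eval_mul, eval_comp]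
    have hstep := mul_le_mul_of_nonneg_left (hiter n z) (sub_nonneg.2 hd)
    calc log⁺ ‖(derivative (polyIter f (n + 1))).eval z‖
        ≤ log⁺ ‖(derivative (polyIter f n)).eval z‖ +
            log⁺ ‖(derivative f).eval ((polyIter f n).eval z)‖ := by
          rw [hchain, norm_mul]; exact posLog_mul
      _ ≤ ((d ^ n - 1) * g z + n * ((d - 1) * C + B)) +
            ((d - 1) * log⁺ ‖(polyIter f n).eval z‖ + B) := add_le_add ih (hf' _)
      _ ≤ _ := by push_cast; linear_combination hstep

theorem stmt5 (f : Polynomial ℂ) (d : ℕ) (hd : 1 < d) (hdeg : f.natDegree = d)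
    (g : ℂ → ℝ)
    (hg : ∀ z : ℂ, Tendsto
      (fun n : ℕ => Real.log (max 1 (‖(polyIter f n).eval z‖)) / (d : ℝ) ^ n)
      atTop (nhds (g z))) :
    ∃ C : ℝ, 0 < C ∧ ∀ n : ℕ, 1 ≤ n → ∀ z : ℂ,
      Real.log (max 1 (‖(Polynomial.derivative (polyIter f n)).eval z‖)) ≤
        ((d : ℝ) ^ n - 1) * g z + C * n := by
  have hd' : (1 : ℝ) < d := by exact_mod_cast hd
  have hG : ∀ z, Tendsto (fun n : ℕ => log⁺ ‖(f.eval ·)^[n] z‖ / (d : ℝ) ^ n) atTop (𝓝 (g z)) :=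
    fun z => by simpa only [polyIter_eval, posLog_eq_log_max_one (norm_nonneg _)] using hg z
  obtain ⟨A, hA⟩ := f.exists_natDegree_mul_posLog_norm_le
  rw [hdeg] at hA
  obtain ⟨B, hB⟩ := exists_posLog_norm_eval_le (hdeg ▸ natDegree_derivative_le f)
  rw [Nat.cast_pred (zero_lt_one.trans hd)] at hB
  have hiter : ∀ n z, log⁺ ‖(polyIter f n).eval z‖ ≤ (d : ℝ) ^ n * g z + A / (d - 1) :=
    fun n z => by
      rw [polyIter_eval, ← apply_iterate_eq_pow_mul_of_tendsto (h := (log⁺ ‖·‖)) hG (by positivity)]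
      linarith [sub_le_of_tendsto hG hd' hA ((f.eval ·)^[n] z)]
  set K := ((d : ℝ) - 1) * (A / (d - 1)) + B
  refine ⟨max K 0 + 1, by positivity, fun n _ z => ?_⟩
  rw [← posLog_eq_log_max_one (norm_nonneg _)]
  calc _ ≤ ((d : ℝ) ^ n - 1) * g z + n * K := posLog_norm_derivative_polyIter_le hd'.le hB hiter n z
    _ ≤ _ := by rw [mul_comm _ (n : ℝ)]; gcongr; linarith [le_max_left K 0]
end

section
/- Let f ∈ ℂ[z] be a polynomial of degree d > 1 and let a ∈ ℂ \ {0}. Then the functions z ↦ (d^n−1)^{-1}·log|(f^n)'(z) − a| − g_f(z) converge to 0 as n → ∞, uniformly on every compact subset of the set Ω := I_∞(f) \ ⋃_{n≥0} (f^n)^{-1}(C(f)∩ℂ). -/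
/-!
Write `f^k` for the iterates and `d = deg f`. Far out, `log |f(w)| = d log |w| + O(1)` and
`log |f'(w)| = (d - 1) log |w| + O(1)`; by compactness every point of `K` enters a forward invariant
neighbourhood of infinity after a common time `N`. Telescoping `log |f^k| / d^k` then gives
`log |f^k(z)| = d^k g(z) + O(1)` for `k ≥ N`, uniformly on `K`, so that `g` is bounded and bounded
below by a positive constant on `K`. By the chain rule `(f^n)' = ∏_{k<n} f'(f^k)`, and since no
factor vanishes on `K`, each factor has `log |f'(f^k z)| = (d - 1) d^k g(z) + O(1)` uniformly in
`k` and `z`; summing the geometric series gives `log |(f^n)'| = (d^n - 1) g + O(n)`. In particular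
`(f^n)'` tends to infinity uniformly on `K`, after which subtracting `a` changes the logarithm by
at most `log 2`.
-/

open Polynomial MeasureTheory Filter

open Topology Bornology Set Asymptotics

theorem abs_sub_pow_mul_le_of_tendsto_div_pow {u : ℕ → ℝ} {d B L : ℝ} (hd : 1 < d) {N : ℕ}
    (hu : ∀ k ≥ N, |u (k + 1) - d * u k| ≤ B)
    (hL : Tendsto (fun k => u k / d ^ k) atTop (𝓝 L)) (k : ℕ) (hk : N ≤ k) :
    |u k - d ^ k * L| ≤ B / (d - 1) := by
  have hd0 : 0 < d := by linarith
  have hstep : ∀ j, dist (u (j + k) / d ^ (j + k)) (u (j + 1 + k) / d ^ (j + 1 + k))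
      ≤ B / d ^ (k + 1) * d⁻¹ ^ j := by
    intro j
    have hdiff : u (j + 1 + k) / d ^ (j + 1 + k) - u (j + k) / d ^ (j + k)
        = (u (j + k + 1) - d * u (j + k)) / d ^ (j + k + 1) := by
      rw [add_right_comm]; field_simp; ring
    rw [Real.dist_eq, abs_sub_comm, hdiff, abs_div, abs_of_pos (pow_pos hd0 _)]
    calc |u (j + k + 1) - d * u (j + k)| / d ^ (j + k + 1)
        ≤ B / d ^ (j + k + 1) := by gcongr; exact hu (j + k) (by omega)
      _ = B / d ^ (k + 1) * d⁻¹ ^ j := by rw [inv_pow]; field_simp; ring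
  have hdist := dist_le_of_le_geometric_of_tendsto₀ _ _ (inv_lt_one_of_one_lt₀ hd) hstep
    ((tendsto_add_atTop_iff_nat k).2 hL)
  rw [Real.dist_eq, zero_add] at hdist
  have hdiff : u k - d ^ k * L = d ^ k * (u k / d ^ k - L) := by field_simp
  rw [hdiff, abs_mul, abs_of_pos (pow_pos hd0 _)]
  calc d ^ k * |u k / d ^ k - L| ≤ d ^ k * (B / d ^ (k + 1) / (1 - d⁻¹)) := by gcongr
    _ = B / (d - 1) := by
        have : d - 1 ≠ 0 := by linarith
        field_simp; ring

theorem abs_sum_sub_geom_sum_le {x : ℕ → ℝ} {d c H : ℝ}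
    (hx : ∀ k, |x k - (d - 1) * d ^ k * c| ≤ H) (n : ℕ) :
    |∑ k ∈ Finset.range n, x k - (d ^ n - 1) * c| ≤ n * H := by
  have hgeom : (d ^ n - 1) * c = ∑ k ∈ Finset.range n, (d - 1) * d ^ k * c := by
    rw [← geom_sum_mul, Finset.sum_mul, Finset.sum_mul]
    exact Finset.sum_congr rfl fun k _ => by ring
  rw [hgeom, ← Finset.sum_sub_distrib]
  refine (Finset.abs_sum_le_sum_abs _ _).trans ?_
  simpa using Finset.sum_le_card_nsmul (Finset.range n) _ H fun k _ => hx k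

theorem abs_sub_mul_le_add_of_abs_sub_le {x y z a b c : ℝ} (hc : 0 < c)
    (hxy : |x - c * y| ≤ a) (hyz : |y - z| ≤ b / c) : |x - c * z| ≤ a + b := by
  calc |x - c * z| = |(x - c * y) + c * (y - z)| := by ring_nf
    _ ≤ a + c * (b / c) := by
      refine (abs_add_le _ _).trans (add_le_add hxy ?_)
      rw [abs_mul, abs_of_pos hc]
      exact mul_le_mul_of_nonneg_left hyz hc.le
    _ = a + b := by rw [mul_div_cancel₀ _ hc.ne']

theorem tendsto_natCast_div_pow_sub_one {d : ℝ} (hd : 1 < d) :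
    Tendsto (fun n : ℕ => (n : ℝ) / (d ^ n - 1)) atTop (𝓝 0) := by
  have h := (tendsto_pow_const_div_const_pow_of_one_lt 1 hd).div
    ((tendsto_pow_atTop_nhds_zero_of_lt_one (by positivity)
      (inv_lt_one_of_one_lt₀ hd)).const_sub 1) (by norm_num)
  rw [sub_zero, zero_div] at h
  refine h.congr' ((eventually_ge_atTop 1).mono fun n hn => ?_)
  have hpos : d ^ n - 1 ≠ 0 := (sub_pos.2 (one_lt_pow₀ hd (by omega))).ne'
  have hne : d ^ n ≠ 0 := by positivity
  simp only [Pi.div_apply, pow_one, inv_pow]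
  field_simp

theorem abs_log_norm_sub_sub_log_norm_le {E : Type*} [NormedAddCommGroup E] {w a : E}
    (hw : w ≠ 0) (ha : 2 * ‖a‖ ≤ ‖w‖) : |Real.log ‖w - a‖ - Real.log ‖w‖| ≤ Real.log 2 := by
  have hw' : 0 < ‖w‖ := norm_pos_iff.2 hw
  have hlow : ‖w‖ / 2 ≤ ‖w - a‖ := by linarith [norm_sub_norm_le w a]
  have hup : ‖w - a‖ ≤ 2 * ‖w‖ := by linarith [norm_sub_le w a]
  have hlog_low := Real.log_le_log (by positivity) hlow
  have hlog_up := Real.log_le_log (by linarith) hup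
  rw [Real.log_div hw'.ne' two_ne_zero] at hlog_low
  rw [Real.log_mul two_ne_zero hw'.ne'] at hlog_up
  exact abs_le.2 ⟨by linarith, by linarith⟩

theorem tendstoUniformlyOn_log_norm_sub_div_sub {X E : Type*} [NormedAddCommGroup E] {K : Set X}
    {D : ℕ → X → E} {g : X → ℝ} {d m H : ℝ} (hd : 1 < d) (hm : 0 < m) (a : E)
    (hgm : ∀ x ∈ K, m ≤ g x) (hD0 : ∀ n, ∀ x ∈ K, D n x ≠ 0)
    (hD : ∀ n, ∀ x ∈ K, |Real.log ‖D n x‖ - (d ^ n - 1) * g x| ≤ n * H) :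
    TendstoUniformlyOn (fun n x => Real.log ‖D n x - a‖ / (d ^ n - 1) - g x) 0 atTop K := by
  have hden : Tendsto (fun n : ℕ => d ^ n - 1) atTop atTop :=
    tendsto_atTop_add_const_right _ (-1) (tendsto_pow_atTop_atTop_of_one_lt hd)
  have hsmall : Tendsto (fun n : ℕ => (Real.log 2 + n * H) / (d ^ n - 1)) atTop (𝓝 0) := by
    have h := ((tendsto_const_nhds (x := Real.log 2)).div_atTop hden).add
      ((tendsto_natCast_div_pow_sub_one hd).mul_const H)
    rw [zero_add, zero_mul] at h
    exact h.congr fun n => by ring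
  have hlarge : Tendsto (fun n : ℕ => (d ^ n - 1) * m - n * H) atTop atTop := by
    have hlim : Tendsto (fun n : ℕ => m - n / (d ^ n - 1) * H) atTop (𝓝 m) := by
      simpa using ((tendsto_natCast_div_pow_sub_one hd).mul_const H).const_sub m
    refine (hden.atTop_mul_pos hm hlim).congr' ((eventually_ge_atTop 1).mono fun n hn => ?_)
    have hpos : d ^ n - 1 ≠ 0 := (sub_pos.2 (one_lt_pow₀ hd (by omega))).ne'
    field_simp
  rw [Metric.tendstoUniformlyOn_iff]
  intro ε hε
  filter_upwards [hsmall.eventually (gt_mem_nhds hε),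
    (Real.tendsto_exp_atTop.comp hlarge).eventually_ge_atTop (2 * ‖a‖),
    eventually_ge_atTop 1] with n hsmall_n hlarge_n hn x hx
  have hpos : 0 < d ^ n - 1 := sub_pos.2 (one_lt_pow₀ hd (by omega))
  have hDa : 2 * ‖a‖ ≤ ‖D n x‖ := by
    refine hlarge_n.trans ?_
    rw [Function.comp_apply, ← Real.exp_log (norm_pos_iff.2 (hD0 n x hx))]
    gcongr
    linarith [mul_le_mul_of_nonneg_left (hgm x hx) hpos.le, (abs_le.1 (hD n x hx)).1]
  have hlog := abs_log_norm_sub_sub_log_norm_le (hD0 n x hx) hDa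
  rw [Pi.zero_apply, dist_zero_left, Real.norm_eq_abs,
    show Real.log ‖D n x - a‖ / (d ^ n - 1) - g x
      = (Real.log ‖D n x - a‖ - (d ^ n - 1) * g x) / (d ^ n - 1) by field_simp,
    abs_div, abs_of_pos hpos]
  refine lt_of_le_of_lt ?_ hsmall_n
  gcongr
  exact (abs_sub_le _ (Real.log ‖D n x‖) _).trans (add_le_add hlog (hD n x hx))

theorem exists_forall_abs_le_of_forall_ge {X : Type*} {K : Set X} {h : ℕ → X → ℝ}
    (hbdd : ∀ k, ∃ C, ∀ x ∈ K, |h k x| ≤ C) {N : ℕ} {B : ℝ}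
    (hB : ∀ k ≥ N, ∀ x ∈ K, |h k x| ≤ B) : ∃ C, ∀ k, ∀ x ∈ K, |h k x| ≤ C := by
  choose C hC using hbdd
  refine ⟨max B (∑ k ∈ Finset.range N, |C k|), fun k x hx => ?_⟩
  rcases lt_or_ge k N with hk | hk
  · refine le_max_of_le_right ((hC k x hx).trans ((le_abs_self _).trans ?_))
    exact Finset.single_le_sum (f := fun k => |C k|) (fun _ _ => abs_nonneg _)
      (Finset.mem_range.2 hk)
  · exact le_max_of_le_left (hB k hk x hx)

theorem exists_forall_norm_gt_of_eventually_cobounded {E : Type*} [SeminormedAddCommGroup E]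
    {P : E → Prop} (h : ∀ᶠ x in cobounded E, P x) : ∃ R, ∀ x, R < ‖x‖ → P x := by
  rw [← comap_norm_atTop, eventually_comap, eventually_atTop] at h
  obtain ⟨R, hR⟩ := h
  exact ⟨R, fun x hx => hR _ hx.le x rfl⟩

theorem IsCompact.exists_forall_ge_iterate_mem {X : Type*} [TopologicalSpace X] {T : X → X}
    (hT : Continuous T) {U K : Set X} (hU : IsOpen U) (hTU : MapsTo T U U) (hK : IsCompact K)
    (hKU : ∀ x ∈ K, ∃ n, T^[n] x ∈ U) : ∃ N, ∀ n ≥ N, ∀ x ∈ K, T^[n] x ∈ U := by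
  have hmono : Monotone fun n => T^[n] ⁻¹' U := by
    refine monotone_nat_of_le_succ fun n x hx => ?_
    simpa only [mem_preimage, Function.iterate_succ_apply'] using hTU hx
  obtain ⟨N, hN⟩ := hK.elim_directed_cover _ (fun n => hU.preimage (hT.iterate n))
    (fun x hx => mem_iUnion.2 (hKU x hx)) hmono.directed_le
  exact ⟨N, fun n hn x hx => hmono hn (hN hx)⟩

theorem IsCompact.exists_bound_abs_log_norm {X E : Type*} [TopologicalSpace X]
    [NormedAddCommGroup E] {K : Set X} (hK : IsCompact K) {φ : X → E} (hφ : ContinuousOn φ K)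
    (h0 : ∀ x ∈ K, φ x ≠ 0) : ∃ C, ∀ x ∈ K, |Real.log ‖φ x‖| ≤ C :=
  hK.exists_bound_of_continuousOn (hφ.norm.log fun x hx => norm_ne_zero_iff.2 (h0 x hx))

theorem IsCompact.exists_abs_le_of_abs_log_norm_sub_mul_le {X E : Type*} [TopologicalSpace X]
    [NormedAddCommGroup E] {K : Set X} (hK : IsCompact K) {φ : X → E} (hφ : ContinuousOn φ K)
    (h0 : ∀ x ∈ K, φ x ≠ 0) {g : X → ℝ} {c B : ℝ} (hc : 0 < c)
    (hg : ∀ x ∈ K, |Real.log ‖φ x‖ - c * g x| ≤ B) : ∃ M, ∀ x ∈ K, |g x| ≤ M := by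
  obtain ⟨C, hC⟩ := hK.exists_bound_abs_log_norm hφ h0
  refine ⟨(C + B) / c, fun x hx => ?_⟩
  have h := abs_sub_abs_le_abs_sub (c * g x) (Real.log ‖φ x‖)
  rw [abs_sub_comm, abs_mul, abs_of_pos hc] at h
  rw [le_div_iff₀ hc]
  linarith [hC x hx, hg x hx]

theorem IsCompact.exists_abs_log_norm_sub_mul_le {X E : Type*} [TopologicalSpace X]
    [NormedAddCommGroup E] {K : Set X} (hK : IsCompact K) {φ : X → E} (hφ : ContinuousOn φ K)
    (h0 : ∀ x ∈ K, φ x ≠ 0) {g : X → ℝ} {M : ℝ} (hg : ∀ x ∈ K, |g x| ≤ M) (c : ℝ) :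
    ∃ C, ∀ x ∈ K, |Real.log ‖φ x‖ - c * g x| ≤ C := by
  obtain ⟨C, hC⟩ := hK.exists_bound_abs_log_norm hφ h0
  refine ⟨C + |c| * M, fun x hx => (abs_sub _ _).trans (add_le_add (hC x hx) ?_)⟩
  rw [abs_mul]
  exact mul_le_mul_of_nonneg_left (hg x hx) (abs_nonneg c)

namespace Polynomial

variable {𝕜 : Type*} [NormedField 𝕜] {p : 𝕜[X]}

theorem tendsto_log_norm_eval_sub_mul_log_norm (hp : p ≠ 0) :
    Tendsto (fun w => Real.log ‖p.eval w‖ - p.natDegree * Real.log ‖w‖) (cobounded 𝕜)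
      (𝓝 (Real.log ‖p.leadingCoeff‖)) := by
  have hlc : p.leadingCoeff ≠ 0 := leadingCoeff_ne_zero.2 hp
  have hw : ∀ᶠ w in cobounded 𝕜, w ≠ 0 := eventually_ne_cobounded 0
  have hratio : Tendsto (fun w => p.eval w / (p.leadingCoeff * w ^ p.natDegree)) (cobounded 𝕜)
      (𝓝 1) :=
    (isEquivalent_iff_tendsto_one (hw.mono fun w hw =>
      mul_ne_zero hlc (pow_ne_zero _ hw))).1
      isEquivalent_cobounded_leading_monomial
  have hlog := ((continuous_norm.tendsto 1).log (by simp)).comp hratio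
  rw [norm_one, Real.log_one] at hlog
  rw [← add_zero (Real.log ‖p.leadingCoeff‖)]
  refine (hlog.const_add (Real.log ‖p.leadingCoeff‖)).congr' ?_
  filter_upwards [hw, hratio.eventually_ne one_ne_zero] with w hw hne
  have hpw : p.eval w ≠ 0 := fun h => hne (by rw [h, zero_div])
  simp only [Function.comp_apply, norm_div, norm_mul, norm_pow]
  rw [Real.log_div (norm_ne_zero_iff.2 hpw) (by positivity),
    Real.log_mul (norm_ne_zero_iff.2 hlc) (by positivity), Real.log_pow]
  ring

theorem exists_eventually_abs_log_norm_eval_sub_le (hp : p ≠ 0) :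
    ∃ B, ∀ᶠ w in cobounded 𝕜, |Real.log ‖p.eval w‖ - p.natDegree * Real.log ‖w‖| ≤ B := by
  refine ⟨|Real.log ‖p.leadingCoeff‖| + 1, ?_⟩
  filter_upwards [(tendsto_log_norm_eval_sub_mul_log_norm hp).eventually
    (Metric.closedBall_mem_nhds _ one_pos)] with w hw
  rw [Real.dist_eq] at hw
  linarith [abs_sub_abs_le_abs_sub (Real.log ‖p.eval w‖ - p.natDegree * Real.log ‖w‖)
    (Real.log ‖p.leadingCoeff‖)]

theorem eventually_norm_le_norm_eval (hp : 1 < p.natDegree) :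
    ∀ᶠ w in cobounded 𝕜, ‖w‖ ≤ ‖p.eval w‖ := by
  have := (isLittleO_cobounded_of_degree_lt (P := (X : 𝕜[X])) (Q := p) ?_).bound one_pos
  · simpa using this
  · exact degree_lt_degree (by rwa [natDegree_X])

end Polynomial

theorem polyIter_eval_eq_iterate (f : ℂ[X]) (n : ℕ) (z : ℂ) :
    (polyIter f n).eval z = (fun w => f.eval w)^[n] z := by
  induction n with
  | zero => simp [polyIter]
  | succ n ih => rw [Function.iterate_succ_apply', ← ih, polyIter, eval_comp]

theorem derivative_polyIter_eval (f : ℂ[X]) (n : ℕ) (z : ℂ) :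
    (derivative (polyIter f n)).eval z
      = ∏ k ∈ Finset.range n, (derivative f).eval ((polyIter f k).eval z) := by
  induction n with
  | zero => simp [polyIter]
  | succ n ih =>
    rw [polyIter, derivative_comp, eval_mul, eval_comp, ih, Finset.prod_range_succ]

theorem IsCompact.exists_forall_ge_norm_polyIter_gt {f : ℂ[X]} {R : ℝ}
    (hf : ∀ u : ℂ, R < ‖u‖ → ‖u‖ ≤ ‖f.eval u‖) {K : Set ℂ} (hK : IsCompact K)
    (hKf : K ⊆ basinInfty f) : ∃ N, ∀ n ≥ N, ∀ z ∈ K, R < ‖(polyIter f n).eval z‖ := by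
  simp only [polyIter_eval_eq_iterate]
  exact hK.exists_forall_ge_iterate_mem (U := {u | R < ‖u‖}) f.continuous
    (isOpen_lt continuous_const continuous_norm) (fun u hu => hu.trans_le (hf u hu))
    fun z hz => by
      simpa only [polyIter_eval_eq_iterate, mem_ofPred_eq] using
        ((hKf hz).eventually_gt_atTop R).exists

-- The last bound gives `g ≥ d ^ (-N)` on `K`, where `N` is the common escape time.
theorem IsCompact.exists_escape_radius {f : ℂ[X]} (hd : 1 < f.natDegree) {K : Set ℂ}
    (hK : IsCompact K) (hKb : K ⊆ basinInfty f) :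
    ∃ B B' R : ℝ, (∀ u : ℂ, R < ‖u‖ → u ≠ 0 ∧
      |Real.log ‖f.eval u‖ - f.natDegree * Real.log ‖u‖| ≤ B ∧
      |Real.log ‖(derivative f).eval u‖ - (f.natDegree - 1) * Real.log ‖u‖| ≤ B' ∧
      B / (f.natDegree - 1) + 1 ≤ Real.log ‖u‖) ∧
      ∃ N, ∀ k ≥ N, ∀ z ∈ K, R < ‖(polyIter f k).eval z‖ := by
  obtain ⟨B, hB⟩ := exists_eventually_abs_log_norm_eval_sub_le (ne_zero_of_natDegree_gt hd)
  obtain ⟨B', hB'⟩ := exists_eventually_abs_log_norm_eval_sub_le (p := derivative f)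
    (ne_zero_of_natDegree_gt ((Nat.sub_pos_of_lt hd).trans_eq (natDegree_derivative f).symm))
  rw [natDegree_derivative, Nat.cast_sub hd.le, Nat.cast_one] at hB'
  obtain ⟨R, hR⟩ := exists_forall_norm_gt_of_eventually_cobounded <|
    (eventually_norm_le_norm_eval hd).and <| (eventually_ne_cobounded 0).and <| hB.and <|
      hB'.and <| tendsto_norm_cobounded_atTop.eventually <|
        Real.tendsto_log_atTop.eventually_ge_atTop (B / (f.natDegree - 1) + 1)
  exact ⟨B, B', R, fun u hu => (hR u hu).2,
    hK.exists_forall_ge_norm_polyIter_gt (fun u hu => (hR u hu).1) hKb⟩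

theorem abs_log_norm_polyIter_sub_le {f : ℂ[X]} (hf : 1 < f.natDegree) {z : ℂ}
    (hz : z ∈ basinInfty f) {L : ℝ}
    (hL : Tendsto (fun n : ℕ => Real.log (max 1 ‖(polyIter f n).eval z‖) /
      (f.natDegree : ℝ) ^ n) atTop (𝓝 L))
    {R B : ℝ}
    (hB : ∀ u : ℂ, R < ‖u‖ → |Real.log ‖f.eval u‖ - f.natDegree * Real.log ‖u‖| ≤ B)
    {N : ℕ} (hN : ∀ k ≥ N, R < ‖(polyIter f k).eval z‖) (k : ℕ) (hk : N ≤ k) :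
    |Real.log ‖(polyIter f k).eval z‖ - (f.natDegree : ℝ) ^ k * L|
      ≤ B / (f.natDegree - 1) := by
  refine abs_sub_pow_mul_le_of_tendsto_div_pow
    (u := fun k => Real.log ‖(polyIter f k).eval z‖) (by exact_mod_cast hf)
    (fun k hk => by simpa only [polyIter, eval_comp] using hB _ (hN k hk)) (hL.congr' ?_) k hk
  filter_upwards [(hz.eventually_ge_atTop 1)] with n hn
  rw [max_eq_right hn]

theorem IsCompact.exists_pos_le_green_and_abs_log_norm_derivative_sub_le {f : ℂ[X]}
    (hd : 1 < f.natDegree) {g : ℂ → ℝ}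
    (hg : ∀ z : ℂ, Tendsto (fun n : ℕ => Real.log (max 1 ‖(polyIter f n).eval z‖) /
      (f.natDegree : ℝ) ^ n) atTop (𝓝 (g z)))
    {K : Set ℂ} (hK : IsCompact K) (hKb : K ⊆ basinInfty f)
    (hcrit : ∀ z ∈ K, ∀ k, (derivative f).eval ((polyIter f k).eval z) ≠ 0) :
    ∃ m > 0, (∀ z ∈ K, m ≤ g z) ∧ ∃ H, ∀ k, ∀ z ∈ K,
      |Real.log ‖(derivative f).eval ((polyIter f k).eval z)‖
        - (f.natDegree - 1) * (f.natDegree : ℝ) ^ k * g z| ≤ H := by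
  set d : ℕ := f.natDegree
  have hd1 : (0 : ℝ) < d - 1 := by rw [sub_pos]; exact_mod_cast hd
  obtain ⟨B, B', R, hR, N, hN⟩ := hK.exists_escape_radius hd hKb
  have hgreen : ∀ z ∈ K, ∀ k ≥ N, |Real.log ‖(polyIter f k).eval z‖ - (d : ℝ) ^ k * g z|
      ≤ B / (d - 1) := fun z hz =>
    abs_log_norm_polyIter_sub_le hd (hKb hz) (hg z) (fun u hu => (hR u hu).2.1)
      fun k hk => hN k hk z hz
  obtain ⟨M, hM⟩ := hK.exists_abs_le_of_abs_log_norm_sub_mul_le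
    (polyIter f N).continuous.continuousOn (fun z hz => (hR _ (hN N le_rfl z hz)).1)
    (by positivity) fun z hz => hgreen z hz N le_rfl
  refine ⟨((d : ℝ) ^ N)⁻¹, by positivity, fun z hz => ?_,
    exists_forall_abs_le_of_forall_ge (fun k => ?_) (N := N) (B := B' + B)
      fun k hk z hz => ?_⟩
  · rw [inv_le_iff_one_le_mul₀' (by positivity)]
    linarith [(hR _ (hN N le_rfl z hz)).2.2.2, abs_le.1 (hgreen z hz N le_rfl)]
  · exact hK.exists_abs_log_norm_sub_mul_le
      ((derivative f).continuous.comp (polyIter f k).continuous).continuousOn (hcrit · · k) hM _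
  · rw [mul_assoc]
    exact abs_sub_mul_le_add_of_abs_sub_le hd1 (hR _ (hN k hk z hz)).2.2.1 (hgreen z hz k hk)

theorem stmt12_general (f : Polynomial ℂ) (d : ℕ) (hd : 1 < d) (hdeg : f.natDegree = d)
    (g : ℂ → ℝ)
    (hg : ∀ z : ℂ, Tendsto
      (fun n : ℕ => Real.log (max 1 ‖(polyIter f n).eval z‖) / (d : ℝ) ^ n)
      atTop (nhds (g z)))
    (a : ℂ)
    (K : Set ℂ) (hK : IsCompact K)
    (hKΩ : K ⊆ basinInfty f \
      ⋃ n : ℕ, {z : ℂ | (Polynomial.derivative f).eval ((polyIter f n).eval z) = 0}) :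
    TendstoUniformlyOn
      (fun (n : ℕ) (z : ℂ) =>
        Real.log ‖(Polynomial.derivative (polyIter f n)).eval z - a‖ /
          ((d : ℝ) ^ n - 1) - g z)
      0 atTop K := by
  subst hdeg
  have hcrit : ∀ z ∈ K, ∀ k, (derivative f).eval ((polyIter f k).eval z) ≠ 0 :=
    fun z hz k h => (hKΩ hz).2 (mem_iUnion.2 ⟨k, h⟩)
  obtain ⟨m, hm, hgm, H, hH⟩ :=
    hK.exists_pos_le_green_and_abs_log_norm_derivative_sub_le hd hg (fun z hz => (hKΩ hz).1)
      hcrit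
  refine tendstoUniformlyOn_log_norm_sub_div_sub (by exact_mod_cast hd) hm (H := H) a hgm
    (fun n z hz => ?_) (fun n z hz => ?_)
  · rw [derivative_polyIter_eval]
    exact Finset.prod_ne_zero_iff.2 fun k _ => hcrit z hz k
  · rw [derivative_polyIter_eval, norm_prod,
      Real.log_prod fun k _ => norm_ne_zero_iff.2 (hcrit z hz k)]
    exact abs_sum_sub_geom_sum_le (fun k => hH k z hz) n

theorem stmt12 (f : Polynomial ℂ) (d : ℕ) (hd : 1 < d) (hdeg : f.natDegree = d)
    (g : ℂ → ℝ)
    (hg : ∀ z : ℂ, Tendsto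
      (fun n : ℕ => Real.log (max 1 ‖(polyIter f n).eval z‖) / (d : ℝ) ^ n)
      atTop (nhds (g z)))
    (a : ℂ) (ha : a ≠ 0)
    (K : Set ℂ) (hK : IsCompact K)
    (hKΩ : K ⊆ basinInfty f \
      ⋃ n : ℕ, {z : ℂ | (Polynomial.derivative f).eval ((polyIter f n).eval z) = 0}) :
    TendstoUniformlyOn
      (fun (n : ℕ) (z : ℂ) =>
        Real.log ‖(Polynomial.derivative (polyIter f n)).eval z - a‖ /
          ((d : ℝ) ^ n - 1) - g z)
      0 atTop K :=
  stmt12_general f d hd hdeg g hg a K hK hKΩ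
end

section
/- Let f ∈ ℂ[z] be a polynomial of degree d > 1. Then the sequence of functions z ↦ d^{-n}·log max{1, |f^n(z)|} converges locally uniformly on ℂ to a continuous function g_f : ℂ → ℝ satisfying g_f ≥ 0 on ℂ, g_f(f(z)) = d·g_f(z) for all z ∈ ℂ, and {z ∈ ℂ : g_f(z) = 0} = K(f), where K(f) := {z ∈ ℂ : sup_n |f^n(z)| < ∞} is the filled-in Julia set of f. -/
/-!
Write `φ = log⁺ ‖·‖`. Since `f(w) ≍ w ^ d` at infinity and everything is continuous, `φ ∘ f - d φ`
is bounded by some `C`. Hence the terms of the telescoping series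
`∑ₖ (φ (f^[k+1] z) / d ^ (k+1) - φ (f^[k] z) / d ^ k)` are bounded by `C / d ^ (k+1)` uniformly
in `z`, so `φ (f^[n] z) / d ^ n` converges uniformly to some `g` with `g ∘ f = d g` and
`|g - φ| ≤ C / (d - 1)`. By the last bound, `g z = 0` iff `g (f^[n] z) = d ^ n g z` stays bounded
iff `φ (f^[n] z)` stays bounded.
-/

open Polynomial MeasureTheory Filter

section EscapeRate

variable {X : Type*} (T : X → X) (φ : X → ℝ) (d : ℝ)

noncomputable def scaledOrbit (n : ℕ) (x : X) : ℝ := φ (T^[n] x) / d ^ n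

-- `lim scaledOrbit`, written as a telescoping series to avoid a junk-valued limit.
noncomputable def escapeRate (x : X) : ℝ :=
  φ x + ∑' k, (scaledOrbit T φ d (k + 1) x - scaledOrbit T φ d k x)

variable {T φ d} {C : ℝ}

lemma abs_scaledOrbit_succ_sub_le (hd : 0 < d) (hφ : ∀ x, |φ (T x) - d * φ x| ≤ C)
    (n : ℕ) (x : X) :
    |scaledOrbit T φ d (n + 1) x - scaledOrbit T φ d n x| ≤ C * d⁻¹ ^ (n + 1) := by
  have key : scaledOrbit T φ d (n + 1) x - scaledOrbit T φ d n x =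
      (φ (T (T^[n] x)) - d * φ (T^[n] x)) * d⁻¹ ^ (n + 1) := by
    simp only [scaledOrbit, Function.iterate_succ_apply', inv_pow]
    field_simp
    ring
  rw [key, abs_mul, abs_of_pos (by positivity : (0 : ℝ) < d⁻¹ ^ (n + 1))]
  exact mul_le_mul_of_nonneg_right (hφ _) (by positivity)

lemma hasSum_mul_inv_pow_succ (hd : 1 < d) :
    HasSum (fun n : ℕ ↦ C * d⁻¹ ^ (n + 1)) (C / (d - 1)) := by
  have h := (hasSum_geometric_of_lt_one (by positivity) (inv_lt_one_of_one_lt₀ hd)).mul_left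
    (C * d⁻¹)
  rw [show C * d⁻¹ * (1 - d⁻¹)⁻¹ = C / (d - 1) by field_simp] at h
  simpa only [pow_succ', mul_assoc] using h

lemma tendstoUniformly_scaledOrbit (hd : 1 < d) (hφ : ∀ x, |φ (T x) - d * φ x| ≤ C) :
    TendstoUniformly (scaledOrbit T φ d) (escapeRate T φ d) atTop := by
  have hsum := tendstoUniformly_tsum_nat (hasSum_mul_inv_pow_succ (C := C) hd).summable
    fun n x ↦ (Real.norm_eq_abs _).trans_le
      (abs_scaledOrbit_succ_sub_le (zero_lt_one.trans hd) hφ n x)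
  have hφ_const : TendstoUniformly (fun (_ : ℕ) ↦ φ) φ atTop :=
    fun _ hu ↦ .of_forall fun _ _ ↦ refl_mem_uniformity hu
  convert hφ_const.add hsum using 1
  · ext n x
    change _ = φ x + ∑ k ∈ Finset.range n, (scaledOrbit T φ d (k + 1) x - scaledOrbit T φ d k x)
    rw [Finset.sum_range_sub (scaledOrbit T φ d · x)]
    simp [scaledOrbit]
  · rfl

lemma abs_sub_escapeRate_le (hd : 1 < d) (hφ : ∀ x, |φ (T x) - d * φ x| ≤ C) (x : X) :
    |φ x - escapeRate T φ d x| ≤ C / (d - 1) := by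
  rw [abs_sub_comm, escapeRate, add_sub_cancel_left]
  exact tsum_of_norm_bounded (hasSum_mul_inv_pow_succ hd)
    fun n ↦ (Real.norm_eq_abs _).trans_le
      (abs_scaledOrbit_succ_sub_le (zero_lt_one.trans hd) hφ n x)

lemma semiconj_escapeRate (hd : 1 < d) (hφ : ∀ x, |φ (T x) - d * φ x| ≤ C) :
    Function.Semiconj (escapeRate T φ d) T (d * ·) := by
  intro x
  have hlim := tendstoUniformly_scaledOrbit hd hφ
  have hshift (n : ℕ) : scaledOrbit T φ d n (T x) = d * scaledOrbit T φ d (n + 1) x := by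
    simp only [scaledOrbit, Function.iterate_succ_apply]
    field_simp [(zero_lt_one.trans hd).ne']
    ring
  refine tendsto_nhds_unique (hlim.tendsto_at (T x)) ?_
  simpa only [hshift] using
    (((tendsto_add_atTop_iff_nat 1).mpr (hlim.tendsto_at x)).const_mul d)

lemma escapeRate_nonneg (hd : 1 < d) (hφ : ∀ x, |φ (T x) - d * φ x| ≤ C) (hφ₀ : ∀ x, 0 ≤ φ x)
    (x : X) : 0 ≤ escapeRate T φ d x :=
  ge_of_tendsto' ((tendstoUniformly_scaledOrbit hd hφ).tendsto_at x)
    fun n ↦ div_nonneg (hφ₀ _) (pow_nonneg (zero_le_one.trans hd.le) n)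

lemma continuous_escapeRate [TopologicalSpace X] (hd : 1 < d)
    (hφ : ∀ x, |φ (T x) - d * φ x| ≤ C) (hT : Continuous T) (hφc : Continuous φ) :
    Continuous (escapeRate T φ d) :=
  (tendstoUniformly_scaledOrbit hd hφ).continuous <|
    .of_forall fun n ↦ (hφc.comp (hT.iterate n)).div_const _

lemma escapeRate_eq_zero_iff (hd : 1 < d) (hφ : ∀ x, |φ (T x) - d * φ x| ≤ C)
    (hφ₀ : ∀ x, 0 ≤ φ x) (x : X) :
    escapeRate T φ d x = 0 ↔ ∃ M, ∀ n, φ (T^[n] x) ≤ M := by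
  have hiter (n : ℕ) : escapeRate T φ d (T^[n] x) = d ^ n * escapeRate T φ d x := by
    rw [(semiconj_escapeRate hd hφ).iterate_right n x, mul_left_iterate_apply]
  have hclose (n : ℕ) := abs_le.mp (abs_sub_escapeRate_le hd hφ (T^[n] x))
  constructor
  · intro h0
    refine ⟨C / (d - 1), fun n ↦ ?_⟩
    have h0n := hiter n
    rw [h0, mul_zero] at h0n
    linarith [hclose n]
  · rintro ⟨M, hM⟩
    refine le_antisymm ?_ (escapeRate_nonneg hd hφ hφ₀ x)
    have hbound (n : ℕ) : escapeRate T φ d x ≤ (M + C / (d - 1)) / d ^ n := by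
      rw [le_div_iff₀ (pow_pos (zero_lt_one.trans hd) n), mul_comm, ← hiter]
      linarith [hclose n, hM n]
    exact ge_of_tendsto' (tendsto_const_nhds.div_atTop (tendsto_pow_atTop_atTop_of_one_lt hd))
      hbound

end EscapeRate

open Real Asymptotics Bornology

lemma Asymptotics.IsBigO.exists_eventually_posLog_norm_le {α E F : Type*}
    [SeminormedAddGroup E] [Norm F] {l : Filter α} {u : α → E} {v : α → F} (h : u =O[l] v) :
    ∃ C, ∀ᶠ x in l, log⁺ ‖u x‖ ≤ C + log⁺ ‖v x‖ := by
  obtain ⟨c, hc⟩ := h.bound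
  exact ⟨log⁺ c, hc.mono fun x hx ↦ (posLog_le_posLog (norm_nonneg _) hx).trans posLog_mul⟩

theorem Polynomial.exists_abs_posLog_norm_eval_sub_le {𝕜 : Type*} [NormedField 𝕜]
    [ProperSpace 𝕜] (P : 𝕜[X]) :
    ∃ C, ∀ w, |log⁺ ‖P.eval w‖ - P.natDegree * log⁺ ‖w‖| ≤ C := by
  rcases eq_or_ne P 0 with rfl | hP
  · exact ⟨0, by simp⟩
  have hdeg : P.degree = (X ^ P.natDegree : 𝕜[X]).degree := by
    rw [degree_X_pow, degree_eq_natDegree hP]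
  obtain ⟨C₁, h₁⟩ := (isBigO_cobounded_of_degree_le hdeg.le).exists_eventually_posLog_norm_le
  obtain ⟨C₂, h₂⟩ := (isBigO_cobounded_of_degree_le hdeg.ge).exists_eventually_posLog_norm_le
  have hO :
      (fun w ↦ log⁺ ‖P.eval w‖ - P.natDegree * log⁺ ‖w‖) =O[cocompact 𝕜] (1 : 𝕜 → ℝ) := by
    rw [← Metric.cobounded_eq_cocompact]
    refine IsBigO.of_bound (max C₁ C₂) ?_
    filter_upwards [h₁, h₂] with w hw₁ hw₂
    simp only [eval_pow, eval_X, norm_pow, posLog_pow] at hw₁ hw₂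
    rw [Real.norm_eq_abs, Pi.one_apply, norm_one, mul_one, abs_le]
    constructor <;> linarith [le_max_left C₁ C₂, le_max_right C₁ C₂]
  have hcont : Continuous fun w ↦ log⁺ ‖P.eval w‖ - P.natDegree * log⁺ ‖w‖ := by fun_prop
  obtain ⟨C, hC⟩ := isBounded_iff_forall_norm_le.mp (hcont.isBounded_range_iff_isBigO.mpr hO)
  exact ⟨C, fun w ↦ hC _ (Set.mem_range_self w)⟩

lemma exists_forall_posLog_norm_le_iff {ι E : Type*} [SeminormedAddGroup E] {u : ι → E} :
    (∃ M, ∀ i, log⁺ ‖u i‖ ≤ M) ↔ ∃ M, ∀ i, ‖u i‖ ≤ M := by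
  constructor
  · rintro ⟨M, hM⟩
    refine ⟨exp M, fun i ↦ ?_⟩
    calc ‖u i‖ ≤ max 1 ‖u i‖ := le_max_right _ _
      _ = exp (log⁺ ‖u i‖) := by
        rw [posLog_eq_log_max_one (norm_nonneg _), exp_log (by positivity)]
      _ ≤ exp M := exp_le_exp.mpr (hM i)
  · rintro ⟨M, hM⟩
    exact ⟨log⁺ M, fun i ↦ posLog_le_posLog (norm_nonneg _) (hM i)⟩

lemma eval_polyIter (f : ℂ[X]) (n : ℕ) (z : ℂ) :
    (polyIter f n).eval z = (fun w ↦ f.eval w)^[n] z := by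
  induction n with
  | zero => simp [polyIter]
  | succ n ih => rw [polyIter, eval_comp, ih, Function.iterate_succ_apply']

theorem stmt15 (f : Polynomial ℂ) (d : ℕ) (hd : 1 < d) (hdeg : f.natDegree = d) :
    ∃ g : ℂ → ℝ,
      TendstoLocallyUniformly
        (fun (n : ℕ) (z : ℂ) =>
          Real.log (max 1 (‖(polyIter f n).eval z‖)) / (d : ℝ) ^ n)
        g atTop ∧
      Continuous g ∧
      (∀ z : ℂ, 0 ≤ g z) ∧
      (∀ z : ℂ, g (f.eval z) = d * g z) ∧
      {z : ℂ | g z = 0} = {z : ℂ | ∃ M : ℝ, ∀ n : ℕ, ‖(polyIter f n).eval z‖ ≤ M} := by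
  obtain ⟨C, hC⟩ := f.exists_abs_posLog_norm_eval_sub_le
  rw [hdeg] at hC
  have hd' : (1 : ℝ) < d := by exact_mod_cast hd
  have hφ₀ (w : ℂ) : 0 ≤ log⁺ ‖w‖ := posLog_nonneg
  have hseq : (fun n z ↦ log (max 1 ‖(polyIter f n).eval z‖) / (d : ℝ) ^ n) =
      scaledOrbit (fun w ↦ f.eval w) (fun w ↦ log⁺ ‖w‖) d := by
    ext n z
    rw [scaledOrbit, eval_polyIter, posLog_eq_log_max_one (norm_nonneg _)]
  refine ⟨escapeRate (fun w ↦ f.eval w) (fun w ↦ log⁺ ‖w‖) d,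
    hseq ▸ (tendstoUniformly_scaledOrbit hd' hC).tendstoLocallyUniformly,
    continuous_escapeRate hd' hC f.continuous (by fun_prop), escapeRate_nonneg hd' hC hφ₀,
    semiconj_escapeRate hd' hC, ?_⟩
  refine Set.ext fun z ↦ (escapeRate_eq_zero_iff hd' hC hφ₀ z).trans ?_
  simp only [eval_polyIter]
  exact exists_forall_posLog_norm_le_iff
end

section
/- Let d > 1 be an integer, let f(z) = z^d, and let a ∈ ℂ \ {0}. Then for every C², compactly supported function φ : ℂ → ℝ there is a constant C > 0 such that for all n ≥ 1, |(d^n−1)^{-1}·Σ_{w} φ(w) − (2π)^{-1}·∫_0^{2π} φ(e^{it}) dt| ≤ C·n·d^{-n}, where the sum ranges over the d^n−1 (simple) roots w ∈ ℂ of the equation (f^n)'(w) = d^n·w^{d^n−1} = a. That is, the averaged pullbacks (d^n−1)^{-1}·((f^n)')^*δ_a converge to the normalized Lebesgue measure on the unit circle at rate O(n·d^{-n}) against C² test functions. -/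
/-!
The roots of `d ^ n * w ^ m = a`, `m = d ^ n - 1`, are the `m`-th roots of `a / d ^ n`: `m`
equally spaced points on the circle of radius `r = ‖a / d ^ n‖ ^ (1 / m)`, where
`|log r| = O(n / m)`. As `φ` is Lipschitz, pushing these points radially onto the unit circle
changes their average by `O(|r - 1|) = O(n / m)`, and the average of a Lipschitz periodic function
over `m` equally spaced points differs from its mean by `O(1 / m)`. Finally `m ≥ d ^ n / 2`.
-/

open Polynomial MeasureTheory Filter

/-- The Laplacian `Δφ = ∂²φ/∂x² + ∂²φ/∂y²` of a function `φ : ℂ → ℝ`. -/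
noncomputable def lap (φ : ℂ → ℝ) (z : ℂ) : ℝ :=
  iteratedFDeriv ℝ 2 φ z ![1, 1] + iteratedFDeriv ℝ 2 φ z ![Complex.I, Complex.I]

open Real Finset

theorem Real.abs_exp_sub_one_le_abs_mul_exp_abs (y : ℝ) : |exp y - 1| ≤ |y| * exp |y| := by
  have h_one_le : 1 ≤ exp |y| := one_le_exp (abs_nonneg y)
  refine abs_le.2 ⟨?_, ?_⟩
  · nlinarith [add_one_le_exp y, neg_abs_le y, abs_nonneg y]
  · have h_mul : (1 - y) * exp y ≤ 1 := by
      simpa [← exp_add] using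
        mul_le_mul_of_nonneg_right (by linarith [add_one_le_exp (-y)] : 1 - y ≤ exp (-y))
          (exp_pos y).le
    have : y * exp y ≤ |y| * exp |y| :=
      mul_le_mul (le_abs_self y) (exp_le_exp.2 (le_abs_self y)) (exp_pos y).le (abs_nonneg y)
    linarith

theorem Real.abs_log_div_pow_le {u x : ℝ} (hu : u ≠ 0) (hx : 1 ≤ x) {n : ℕ} (hn : 1 ≤ n) :
    |log (u / x ^ n)| ≤ (|log u| + log x) * n := by
  have h_log_x : 0 ≤ log x := log_nonneg hx
  have hn' : (1 : ℝ) ≤ n := by exact_mod_cast hn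
  rw [log_div hu (pow_ne_zero _ (by linarith)), log_pow]
  calc |log u - n * log x| ≤ |log u| + n * log x := by
        simpa [abs_of_nonneg (by positivity : (0 : ℝ) ≤ n * log x)] using
          abs_sub (log u) (n * log x)
    _ ≤ (|log u| + log x) * n := by nlinarith [abs_nonneg (log u)]

theorem Nat.le_pow_sub_one {d : ℕ} (hd : 1 < d) (n : ℕ) : n ≤ d ^ n - 1 := by
  have := Nat.lt_pow_self hd (n := n)
  omega

theorem LipschitzWith.abs_integral_sub_mul_le {g : ℝ → ℝ} {K : NNReal} (hg : LipschitzWith K g)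
    {a b : ℝ} (hab : a ≤ b) : |(∫ t in a..b, g t) - (b - a) * g a| ≤ K * (b - a) ^ 2 := by
  have h_bound : ∀ t ∈ Set.uIoc a b, ‖g t - g a‖ ≤ K * (b - a) := fun t ht => by
    rw [Set.uIoc_of_le hab] at ht
    calc ‖g t - g a‖ = dist (g t) (g a) := rfl
      _ ≤ K * dist t a := hg.dist_le_mul t a
      _ ≤ K * (b - a) := by
        gcongr
        rw [Real.dist_eq, abs_of_pos (by linarith [ht.1])]
        linarith [ht.2]
  have h_int := hg.continuous.intervalIntegrable (μ := volume) a b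
  have := intervalIntegral.norm_integral_le_of_norm_le_const h_bound
  rw [intervalIntegral.integral_sub h_int intervalIntegrable_const, intervalIntegral.integral_const,
    smul_eq_mul, abs_of_nonneg (sub_nonneg.2 hab)] at this
  simpa [sq, mul_assoc] using this

theorem Function.Periodic.abs_sum_div_sub_integral_le {g : ℝ → ℝ} {K : NNReal} {T : ℝ}
    (hg : LipschitzWith K g) (hper : Function.Periodic g T) (hT : 0 < T) (θ : ℝ) {m : ℕ}
    (hm : m ≠ 0) :
    |(∑ k ∈ range m, g (θ + T * k / m)) / m - T⁻¹ * ∫ t in (0 : ℝ)..T, g t| ≤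
      K * T / m := by
  have hm' : (0 : ℝ) < m := by positivity
  set x : ℕ → ℝ := fun k => θ + T * k / m with hx
  have h_step : ∀ k, x (k + 1) - x k = T / m := fun k => by
    simp only [hx]; push_cast; ring
  have h_integral : (∫ t in (0 : ℝ)..T, g t) = ∑ k ∈ range m, ∫ t in x k..x (k + 1), g t := by
    rw [intervalIntegral.sum_integral_adjacent_intervals
      fun k _ => hg.continuous.intervalIntegrable _ _]
    simpa [hx, hm'.ne'] using hper.intervalIntegral_add_eq 0 θ
  have h_split : (∑ k ∈ range m, g (x k)) / m - T⁻¹ * ∫ t in (0 : ℝ)..T, g t =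
      -T⁻¹ * ∑ k ∈ range m, ((∫ t in x k..x (k + 1), g t) - (x (k + 1) - x k) * g (x k)) := by
    simp only [h_integral, h_step, sum_sub_distrib, ← mul_sum]
    field_simp
    ring
  rw [h_split, abs_mul, abs_neg, abs_inv, abs_of_pos hT]
  calc T⁻¹ * |∑ k ∈ range m, ((∫ t in x k..x (k + 1), g t) - (x (k + 1) - x k) * g (x k))|
      ≤ T⁻¹ * ∑ k ∈ range m, K * (x (k + 1) - x k) ^ 2 := by
        gcongr
        refine (abs_sum_le_sum_abs _ _).trans (sum_le_sum fun k _ => ?_)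
        exact hg.abs_integral_sub_mul_le (by linarith [h_step k, div_pos hT hm'])
    _ = K * T / m := by
        simp only [h_step, sum_const, card_range, nsmul_eq_mul]
        field_simp

theorem circleMap_zero_sub_circleMap_zero (r s θ : ℝ) :
    circleMap 0 r θ - circleMap 0 s θ = circleMap 0 (r - s) θ := by
  simp [circleMap, sub_mul]

theorem circleAverage_zero_one_eq (f : ℂ → ℝ) :
    circleAverage f 0 1 = (2 * π)⁻¹ * ∫ t in (0 : ℝ)..(2 * π), f (Complex.exp (Complex.I * t)) := by
  simp [circleAverage_def, circleMap_zero, mul_comm]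

theorem LipschitzWith.abs_sum_circleMap_div_sub_circleAverage_le {φ : ℂ → ℝ} {K : NNReal}
    (hφ : LipschitzWith K φ) (r θ : ℝ) {m : ℕ} (hm : m ≠ 0) :
    |(∑ k ∈ range m, φ (circleMap 0 r (θ + 2 * π * k / m))) / m -
      circleAverage φ 0 1| ≤ K * (|r - 1| + 2 * π / m) := by
  have hm' : (0 : ℝ) < m := by positivity
  have h_radius : ∀ t, |φ (circleMap 0 r t) - φ (circleMap 0 1 t)| ≤ K * |r - 1| := fun t => by
    simpa [Real.dist_eq, dist_eq_norm, circleMap_zero_sub_circleMap_zero, norm_circleMap_zero]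
      using hφ.dist_le_mul (circleMap 0 r t) (circleMap 0 1 t)
  have h_riemann := ((periodic_circleMap 0 1).comp φ).abs_sum_div_sub_integral_le
    (by simpa using hφ.comp (lipschitzWith_circleMap 0 1)) two_pi_pos θ hm
  have h_sum : |(∑ k ∈ range m, φ (circleMap 0 r (θ + 2 * π * k / m))) / m -
      (∑ k ∈ range m, φ (circleMap 0 1 (θ + 2 * π * k / m))) / m| ≤ K * |r - 1| := by
    rw [← sub_div, ← sum_sub_distrib, abs_div, abs_of_pos hm', div_le_iff₀ hm']
    calc _ ≤ ∑ k ∈ range m, |φ (circleMap 0 r (θ + 2 * π * k / m)) -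
            φ (circleMap 0 1 (θ + 2 * π * k / m))| := abs_sum_le_sum_abs _ _
      _ ≤ ∑ k ∈ range m, K * |r - 1| := sum_le_sum fun k _ => h_radius _
      _ = K * |r - 1| * m := by simp [mul_comm]
  rw [circleAverage_def, smul_eq_mul]
  calc _ ≤ K * |r - 1| + K * (2 * π) / m := (abs_sub_le _ _ _).trans (add_le_add h_sum h_riemann)
    _ = K * (|r - 1| + 2 * π / m) := by ring

theorem Polynomial.roots_C_mul_X_pow_sub_C {K : Type*} [Field K] (m : ℕ) {c : K} (hc : c ≠ 0)
    (a : K) : (C c * X ^ m - C a).roots = nthRoots m (a / c) := by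
  rw [nthRoots, ← roots_C_mul (X ^ m - C (a / c)) hc, mul_sub, ← C_mul, mul_div_cancel₀ a hc]

theorem Complex.nthRoots_eq_map_circleMap {m : ℕ} (hm : m ≠ 0) {b : ℂ} (hb : b ≠ 0) :
    nthRoots m b = (Multiset.range m).map
      (fun k : ℕ => circleMap 0 (Real.exp (Real.log ‖b‖ / m)) (arg b / m + 2 * π * k / m)) := by
  have hm' : (m : ℂ) ≠ 0 := Nat.cast_ne_zero.2 hm
  have h_root : exp (log b / m) ^ m = b := by
    rw [← exp_nat_mul, mul_div_cancel₀ _ hm', exp_log hb]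
  rw [(isPrimitiveRoot_exp m hm).nthRoots_eq h_root]
  refine Multiset.map_congr rfl fun k _ => ?_
  rw [circleMap_zero, ← exp_nat_mul, ofReal_exp, ← exp_add, ← exp_add, ← re_add_im (log b),
    log_re, log_im]
  congr 1
  push_cast
  field_simp
  ring

theorem LipschitzWith.abs_sum_nthRoots_div_sub_circleAverage_le {φ : ℂ → ℝ} {K : NNReal}
    (hφ : LipschitzWith K φ) {m : ℕ} (hm : m ≠ 0) {b : ℂ} (hb : b ≠ 0) :
    |((nthRoots m b).map φ).sum / m - circleAverage φ 0 1| ≤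
      K * (|log ‖b‖| / m * exp (|log ‖b‖| / m) + 2 * π / m) := by
  rw [Complex.nthRoots_eq_map_circleMap hm hb, Multiset.map_map]
  refine (hφ.abs_sum_circleMap_div_sub_circleAverage_le _ _ hm).trans ?_
  have h_abs : |log ‖b‖ / m| = |log ‖b‖| / m := by rw [abs_div, Nat.abs_cast]
  gcongr
  simpa [h_abs] using abs_exp_sub_one_le_abs_mul_exp_abs (log ‖b‖ / m)

theorem LipschitzWith.abs_sum_nthRoots_div_sub_circleAverage_le_of_abs_log_le {φ : ℂ → ℝ}
    {K : NNReal} (hφ : LipschitzWith K φ) {m n : ℕ} (hn : 1 ≤ n) (hnm : n ≤ m) {b : ℂ}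
    (hb : b ≠ 0) {B : ℝ} (hlog : |log ‖b‖| ≤ B * n) :
    |((nthRoots m b).map φ).sum / m - circleAverage φ 0 1| ≤ K * (B * exp B + 2 * π) * n / m := by
  have hn' : (1 : ℝ) ≤ n := by exact_mod_cast hn
  have hm : (0 : ℝ) < m := by exact_mod_cast (by omega : 0 < m)
  have hB : 0 ≤ B := by nlinarith [abs_nonneg (log ‖b‖)]
  have h_le_B : B * n / m ≤ B := div_le_of_le_mul₀ hm.le hB (by gcongr)
  calc _ ≤ K * (|log ‖b‖| / m * exp (|log ‖b‖| / m) + 2 * π / m) :=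
        hφ.abs_sum_nthRoots_div_sub_circleAverage_le (by omega) hb
    _ ≤ K * (B * n / m * exp B + 2 * π * n / m) := by
        have h_log_div : |log ‖b‖| / m ≤ B * n / m := by gcongr
        have h_two_pi : 2 * π / m ≤ 2 * π * n / m :=
          div_le_div_of_nonneg_right (le_mul_of_one_le_right two_pi_pos.le hn') hm.le
        gcongr _ * (?_ * ?_ + ?_)
        exact Real.exp_le_exp.2 (h_log_div.trans h_le_B)
    _ = K * (B * exp B + 2 * π) * n / m := by ring

theorem stmt16 (d : ℕ) (hd : 1 < d) (a : ℂ) (ha : a ≠ 0)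
    (φ : ℂ → ℝ) (hφ : ContDiff ℝ 2 φ) (hsupp : HasCompactSupport φ) :
    ∃ C : ℝ, 0 < C ∧ ∀ n : ℕ, 1 ≤ n →
      |(((Polynomial.C ((d : ℂ) ^ n) * Polynomial.X ^ (d ^ n - 1) - Polynomial.C a).roots).map
          (fun w => φ w)).sum / ((d : ℝ) ^ n - 1) -
        (2 * Real.pi)⁻¹ * ∫ t in (0 : ℝ)..(2 * Real.pi), φ (Complex.exp (Complex.I * t))| ≤
      C * n / (d : ℝ) ^ n := by
  obtain ⟨K, hK⟩ := hφ.lipschitzWith_of_hasCompactSupport hsupp (by norm_num)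
  set B : ℝ := |Real.log ‖a‖| + Real.log d
  have hB : 0 < B := by
    have := Real.log_pos (by exact_mod_cast hd : (1 : ℝ) < d)
    positivity
  refine ⟨2 * (K + 1) * (B * Real.exp B + 2 * π), by positivity, fun n hn => ?_⟩
  have hdn : 2 ≤ d ^ n := Nat.one_lt_pow (by omega) hd
  have hm_cast : (d : ℝ) ^ n - 1 = (d ^ n - 1 : ℕ) := by
    rw [Nat.cast_sub (by omega), Nat.cast_pow, Nat.cast_one]
  have hc : (d : ℂ) ^ n ≠ 0 := pow_ne_zero _ (by exact_mod_cast (by omega : d ≠ 0))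
  have h_log : |Real.log ‖a / (d : ℂ) ^ n‖| ≤ B * n := by
    rw [norm_div, norm_pow, Complex.norm_natCast]
    exact Real.abs_log_div_pow_le (norm_ne_zero_iff.2 ha) (by exact_mod_cast hd.le) hn
  rw [roots_C_mul_X_pow_sub_C _ hc, hm_cast, ← circleAverage_zero_one_eq]
  calc _ ≤ K * (B * Real.exp B + 2 * π) * n / (d ^ n - 1 : ℕ) :=
        hK.abs_sum_nthRoots_div_sub_circleAverage_le_of_abs_log_le hn
          (Nat.le_pow_sub_one hd n) (div_ne_zero ha hc) h_log
    _ ≤ (K + 1) * (B * Real.exp B + 2 * π) * n / ((d : ℝ) ^ n / 2) := by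
        have : (2 : ℝ) ≤ d ^ n := by exact_mod_cast hdn
        gcongr ?_ * _ * _ / ?_
        · linarith
        · linarith
    _ = 2 * (K + 1) * (B * Real.exp B + 2 * π) * n / (d : ℝ) ^ n := by ring
end
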